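/- arXiv:2004.01755 — 2 statements merged into one kernel-verified Lean document; each statement's English description precedes it below -/
import Mathlib

section
/- Let Γ be a connected μ-uniform graph with Cheeger constant h(Γ) > 0, and let η : [0,ℓ] → Γ be a geodesic with ℓ ∈ ℤ⁺. Suppose t ∈ ℤ⁺ with D < t ≤ ℓ, where D ∈ ℕ, and suppose A is a finite set of vertices containing the vertices η(0), η(1), ..., η(t−D−1) whose boundary ∂A is contained in the sphere S(η(t), D). Then t ≤ D + h(Γ)⁻¹ μ^D. -/
/-!
The points `η 0, …, η (t - D - 1)` are distinct and lie in `A`, so `t - D ≤ |A|`. The boundary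
of `A` lies in the sphere of radius `D` about `η t`, which in a `μ`-uniform graph has at most
`μ ^ D` points, and the Cheeger inequality gives `|A| ≤ h(Γ)⁻¹ |∂A| ≤ h(Γ)⁻¹ μ ^ D`.
-/

open Filter

/-- The vertex boundary of a finite set of vertices `A`: the vertices at graph
distance exactly 1 from `A`, i.e. outside `A` but adjacent to a vertex of `A`. -/
def vertexBoundary {V : Type*} (G : SimpleGraph V) (A : Finset V) : Set V :=
  {v | v ∉ A ∧ ∃ a ∈ A, G.Adj v a}

/-- The combinatorial Cheeger isoperimetric constant `h(Γ) = inf_A |∂A|/|A|`,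
where `A` ranges over all non-empty finite sets of vertices. -/
noncomputable def cheegerConst {V : Type*} (G : SimpleGraph V) : ℝ :=
  sInf { r : ℝ | ∃ A : Finset V, A.Nonempty ∧
    r = ((vertexBoundary G A).ncard : ℝ) / (A.card : ℝ) }

/-- A graph is `μ`-uniform if every vertex has at most `μ` neighbors. -/
def UniformGraph {V : Type*} (G : SimpleGraph V) (μ : ℕ) : Prop :=
  ∀ v : V, (G.neighborSet v).Finite ∧ (G.neighborSet v).ncard ≤ μ

namespace SimpleGraph

variable {V : Type*} {G : SimpleGraph V}

lemma Connected.exists_adj_dist_eq_of_dist_eq_succ (hconn : G.Connected) {v w : V} {D : ℕ}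
    (hw : G.dist v w = D + 1) : ∃ u, G.dist v u = D ∧ G.Adj u w := by
  obtain ⟨q, hq⟩ := hconn.exists_walk_length_eq_dist w v
  have hq_not_nil : ¬q.Nil := Walk.not_nil_iff_lt_length.mpr (by rw [hq, dist_comm]; omega)
  have htail : q.tail.length = D := by
    have := Walk.length_tail_add_one hq_not_nil
    rw [hq, dist_comm] at this
    omega
  have hle : G.dist q.snd v ≤ D := htail ▸ dist_le q.tail
  have htri : G.dist w v ≤ G.dist w q.snd + G.dist q.snd v := hconn.dist_triangle
  rw [dist_comm, hw, dist_eq_one_iff_adj.mpr (Walk.adj_snd hq_not_nil)] at htri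
  exact ⟨q.snd, by rw [dist_comm]; omega, (Walk.adj_snd hq_not_nil).symm⟩

end SimpleGraph

lemma UniformGraph.finite_sphere_and_ncard_le {V : Type*} {G : SimpleGraph V} {μ : ℕ}
    (hμ : UniformGraph G μ) (hconn : G.Connected) (v : V) (D : ℕ) :
    {w | G.dist v w = D}.Finite ∧ {w | G.dist v w = D}.ncard ≤ μ ^ D := by
  induction D with
  | zero =>
    have hsingleton : {w | G.dist v w = 0} = {v} := by
      ext w
      simp [hconn.dist_eq_zero_iff, eq_comm]
    rw [hsingleton]
    simp
  | succ D ih =>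
    obtain ⟨hfin, hcard⟩ := ih
    have hsub : {w | G.dist v w = D + 1} ⊆ ⋃ u ∈ hfin.toFinset, G.neighborSet u := by
      intro w hw
      obtain ⟨u, hu, hadj⟩ := hconn.exists_adj_dist_eq_of_dist_eq_succ hw
      exact Set.mem_biUnion (hfin.mem_toFinset.mpr hu) hadj
    have hunion_fin : (⋃ u ∈ hfin.toFinset, G.neighborSet u).Finite :=
      hfin.toFinset.finite_toSet.biUnion fun u _ => (hμ u).1
    refine ⟨hunion_fin.subset hsub, ?_⟩
    calc {w | G.dist v w = D + 1}.ncard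
        ≤ (⋃ u ∈ hfin.toFinset, G.neighborSet u).ncard := Set.ncard_le_ncard hsub hunion_fin
      _ ≤ ∑ u ∈ hfin.toFinset, (G.neighborSet u).ncard := Finset.set_ncard_biUnion_le _ _
      _ ≤ ∑ _u ∈ hfin.toFinset, μ := Finset.sum_le_sum fun u _ => (hμ u).2
      _ = {w | G.dist v w = D}.ncard * μ := by
        rw [Finset.sum_const, smul_eq_mul, Set.ncard_eq_toFinset_card _ hfin]
      _ ≤ μ ^ (D + 1) := by rw [pow_succ]; exact Nat.mul_le_mul_right μ hcard

lemma cheegerConst_mul_card_le {V : Type*} (G : SimpleGraph V) {A : Finset V}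
    (hA : A.Nonempty) : cheegerConst G * A.card ≤ (vertexBoundary G A).ncard := by
  have hbdd : BddBelow {r : ℝ | ∃ B : Finset V, B.Nonempty ∧
      r = ((vertexBoundary G B).ncard : ℝ) / (B.card : ℝ)} := by
    refine ⟨0, fun r ⟨B, _, hr⟩ => ?_⟩
    rw [hr]
    positivity
  have hle : cheegerConst G ≤ (vertexBoundary G A).ncard / A.card :=
    csInf_le hbdd ⟨A, hA, rfl⟩
  rwa [le_div_iff₀ (by exact_mod_cast hA.card_pos)] at hle

lemma injOn_of_dist_eq {V : Type*} {G : SimpleGraph V} {ℓ : ℕ} {η : ℕ → V}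
    (hgeo : ∀ i j, i ≤ ℓ → j ≤ ℓ → G.dist (η i) (η j) = max i j - min i j) :
    Set.InjOn η (Set.Iic ℓ) := by
  intro i hi j hj hij
  have := hgeo i j hi hj
  rw [hij, SimpleGraph.dist_self] at this
  omega

theorem geodesic_length_bound_general {V : Type*} (G : SimpleGraph V) (hconn : G.Connected)
    (μ : ℕ) (hμ : UniformGraph G μ) (hh : 0 < cheegerConst G)
    (ℓ t D : ℕ) (η : ℕ → V)
    (hgeo : ∀ i j, i ≤ ℓ → j ≤ ℓ → G.dist (η i) (η j) = max i j - min i j)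
    (hDt : D < t) (htℓ : t ≤ ℓ)
    (A : Finset V) (hAgeo : ∀ i, i ≤ t - D - 1 → η i ∈ A)
    (hbdry : vertexBoundary G A ⊆ {w : V | G.dist (η t) w = D}) :
    (t : ℝ) ≤ (D : ℝ) + (cheegerConst G)⁻¹ * (μ : ℝ) ^ D := by
  have hgeo_card : t - D ≤ A.card := by
    rw [← Finset.card_range (t - D)]
    refine Finset.card_le_card_of_injOn η (fun i hi => hAgeo i ?_)
      ((injOn_of_dist_eq hgeo).mono ?_)
    · simp only [Finset.coe_range, Set.mem_Iio] at hi
      omega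
    · intro i hi
      simp only [Finset.coe_range, Set.mem_Iio, Set.mem_Iic] at hi ⊢
      omega
  obtain ⟨hsphere_fin, hsphere_card⟩ := hμ.finite_sphere_and_ncard_le hconn (η t) D
  have hbdry_card : (vertexBoundary G A).ncard ≤ μ ^ D :=
    (Set.ncard_le_ncard hbdry hsphere_fin).trans hsphere_card
  have hcheeger := cheegerConst_mul_card_le G ⟨η 0, hAgeo 0 (Nat.zero_le _)⟩
  have hA : (A.card : ℝ) ≤ (cheegerConst G)⁻¹ * (μ : ℝ) ^ D := by
    rw [le_inv_mul_iff₀ hh]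
    exact hcheeger.trans (by exact_mod_cast hbdry_card)
  have : ((t - D : ℕ) : ℝ) ≤ A.card := by exact_mod_cast hgeo_card
  push_cast [hDt.le] at this
  linarith

/-- Key counting step: if `η` is a geodesic (its integer points are vertices at
mutual graph distance `|i - j|`), `D < t ≤ ℓ`, and `A` is a finite vertex set
containing `η(0), …, η(t-D-1)` whose boundary is contained in the sphere
`S(η(t), D)`, then `t ≤ D + h(Γ)⁻¹ μ^D`. -/
theorem geodesic_length_bound {V : Type*} (G : SimpleGraph V) (hconn : G.Connected)
    (μ : ℕ) (hμ : UniformGraph G μ) (hh : 0 < cheegerConst G)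
    (ℓ t D : ℕ) (η : ℕ → V)
    (hgeo : ∀ i j, i ≤ ℓ → j ≤ ℓ → G.dist (η i) (η j) = max i j - min i j)
    (ht0 : 0 < t) (hDt : D < t) (htℓ : t ≤ ℓ)
    (A : Finset V) (hAgeo : ∀ i, i ≤ t - D - 1 → η i ∈ A)
    (hbdry : vertexBoundary G A ⊆ {w : V | G.dist (η t) w = D}) :
    (t : ℝ) ≤ (D : ℝ) + (cheegerConst G)⁻¹ * (μ : ℝ) ^ D :=
  geodesic_length_bound_general G hconn μ hμ hh ℓ t D η hgeo hDt htℓ A hAgeo hbdry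
end

section
/- Suppose X and Y are proper hyperbolic geodesic spaces and f : X → Y is a quasi-isometry. If X has a pole in a point v, then Y has a pole in f(v). -/
open Filter Metric

/-- The Gromov product with respect to base point `o`. -/
noncomputable def gromovProd {X : Type*} [MetricSpace X] (o x y : X) : ℝ :=
  (dist x o + dist y o - dist x y) / 2

/-- A metric space is Gromov hyperbolic if the Gromov products satisfy the
`δ`-inequality for some `δ ≥ 0`. -/
def GromovHyperbolic (X : Type*) [MetricSpace X] : Prop :=
  ∃ δ : ℝ, 0 ≤ δ ∧ ∀ o x y z : X,
    min (gromovProd o x z) (gromovProd o z y) - δ ≤ gromovProd o x y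

/-- A geodesic ray: an isometric embedding of `[0, ∞)`. -/
def IsGeodesicRay {X : Type*} [MetricSpace X] (γ : ℝ → X) : Prop :=
  ∀ s t : ℝ, 0 ≤ s → 0 ≤ t → dist (γ s) (γ t) = |s - t|

/-- `X` has a pole in `v`: there is `M > 0` such that each point of `X` lies in the
`M`-neighborhood of some geodesic ray emanating from `v`. -/
def HasPoleAt {X : Type*} [MetricSpace X] (v : X) : Prop :=
  ∃ M : ℝ, 0 < M ∧ ∀ x : X, ∃ γ : ℝ → X,
    IsGeodesicRay γ ∧ γ 0 = v ∧ ∃ t : ℝ, 0 ≤ t ∧ dist x (γ t) ≤ M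

/-- A geodesic segment from `x` to `y`, parametrized by arc length on `[0, d(x,y)]`. -/
def IsGeodesicSegment {X : Type*} [MetricSpace X] (γ : ℝ → X) (x y : X) : Prop :=
  γ 0 = x ∧ γ (dist x y) = y ∧
    ∀ s ∈ Set.Icc (0 : ℝ) (dist x y), ∀ t ∈ Set.Icc (0 : ℝ) (dist x y),
      dist (γ s) (γ t) = |s - t|

/-- A geodesic metric space: every pair of points is joined by a geodesic. -/
def GeodesicSpace (X : Type*) [MetricSpace X] : Prop :=
  ∀ x y : X, ∃ γ : ℝ → X, IsGeodesicSegment γ x y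

/-- `f` is an `(α, β)`-quasi-isometric embedding. -/
def QuasiIsometricEmbedding {X Y : Type*} [MetricSpace X] [MetricSpace Y]
    (f : X → Y) (α β : ℝ) : Prop :=
  1 ≤ α ∧ 0 ≤ β ∧ ∀ x y : X,
    α⁻¹ * dist x y - β ≤ dist (f x) (f y) ∧ dist (f x) (f y) ≤ α * dist x y + β

/-- `f` is `ε`-full. -/
def IsFull {X Y : Type*} [MetricSpace X] [MetricSpace Y] (f : X → Y) (ε : ℝ) : Prop :=
  0 ≤ ε ∧ ∀ y : Y, ∃ x : X, dist (f x) y ≤ ε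

/-! Take `q n = f (γ n)` for a ray `γ` from `v` passing near a preimage of `y`; it is a
quasi-geodesic in `Y`. In a `δ`-hyperbolic space the Gromov product of the ends of a chain of
`2 ^ k` short steps, seen from any point, is at least the distance to the chain minus `δ k`; this
gives the Morse lemma, so the geodesics from `f v` to `q n` all pass uniformly close to a fixed
point of `q` near `y`, hence to `y`. As `Y` is proper, an ultralimit of these geodesics is a
geodesic ray from `f v` passing just as close to `y`. -/

open Topology

section

variable {Y : Type*} [MetricSpace Y]

def GromovHyperbolicWith (Y : Type*) [MetricSpace Y] (δ : ℝ) : Prop :=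
  ∀ o x y z : Y, min (gromovProd o x z) (gromovProd o z y) - δ ≤ gromovProd o x y

theorem gromovProd_comm (o x y : Y) : gromovProd o x y = gromovProd o y x := by
  simp only [gromovProd, dist_comm x y]; ring

theorem gromovProd_self (o x : Y) : gromovProd o x x = dist x o := by
  simp only [gromovProd, dist_self]; ring

theorem min_dist_sub_le_gromovProd (o x y : Y) :
    min (dist x o) (dist y o) - dist x y / 2 ≤ gromovProd o x y := by
  unfold gromovProd
  linarith [min_le_left (dist x o) (dist y o), min_le_right (dist x o) (dist y o)]

namespace IsGeodesicSegment

variable {σ : ℝ → Y} {x y : Y}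

theorem dist_eq_sub (hσ : IsGeodesicSegment σ x y) {s t : ℝ} (hs : 0 ≤ s) (hst : s ≤ t)
    (ht : t ≤ dist x y) : dist (σ s) (σ t) = t - s := by
  rw [hσ.2.2 s ⟨hs, hst.trans ht⟩ t ⟨hs.trans hst, ht⟩, abs_sub_comm,
    abs_of_nonneg (sub_nonneg.2 hst)]

theorem dist_left (hσ : IsGeodesicSegment σ x y) {u : ℝ} (hu : u ∈ Set.Icc 0 (dist x y)) :
    dist x (σ u) = u := by
  simpa [hσ.1] using hσ.dist_eq_sub le_rfl hu.1 hu.2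

theorem reverse (hσ : IsGeodesicSegment σ x y) :
    IsGeodesicSegment (fun r => σ (dist x y - r)) y x := by
  refine ⟨by simpa using hσ.2.1, by simpa [dist_comm y x] using hσ.1, ?_⟩
  rintro s ⟨hs₀, hs₁⟩ t ⟨ht₀, ht₁⟩
  rw [dist_comm y x] at hs₁ ht₁
  rw [hσ.2.2 _ ⟨by linarith, by linarith⟩ _ ⟨by linarith, by linarith⟩, abs_sub_comm]
  ring_nf

theorem continuousOn (hσ : IsGeodesicSegment σ x y) : ContinuousOn σ (Set.Icc 0 (dist x y)) :=
  (LipschitzOnWith.of_dist_le_mul (K := 1) fun s hs t ht => by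
    simp [hσ.2.2 s hs t ht, Real.dist_eq]).continuousOn

theorem gromovProd_eq_zero (hσ : IsGeodesicSegment σ x y) {s u t : ℝ} (hs : 0 ≤ s)
    (hsu : s ≤ u) (hut : u ≤ t) (ht : t ≤ dist x y) : gromovProd (σ u) (σ s) (σ t) = 0 := by
  rw [gromovProd, hσ.dist_eq_sub hs hsu (hut.trans ht), dist_comm,
    hσ.dist_eq_sub (hs.trans hsu) hut ht, hσ.dist_eq_sub hs (hsu.trans hut) ht]
  ring

end IsGeodesicSegment

namespace GromovHyperbolicWith

variable {δ : ℝ}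

theorem min₃_sub_le (hyp : GromovHyperbolicWith Y δ) (hδ : 0 ≤ δ) (o x y z w : Y) :
    min (min (gromovProd o x y) (gromovProd o y z)) (gromovProd o z w) - 2 * δ
      ≤ gromovProd o x w := by
  have hxz := hyp o x z y
  have hxw := hyp o x w z
  rcases min_cases (gromovProd o x y) (gromovProd o y z) with h | h <;>
  rcases min_cases (gromovProd o x z) (gromovProd o z w) with h' | h' <;>
  rcases min_cases (min (gromovProd o x y) (gromovProd o y z)) (gromovProd o z w) with h'' | h'' <;>
  linarith

theorem exists_dist_sub_le_gromovProd_of_le (hyp : GromovHyperbolicWith Y δ) {q : ℕ → Y}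
    {h : ℝ} (hq : ∀ i, dist (q i) (q (i + 1)) ≤ h) (o : Y) {k a b : ℕ} (hab : a ≤ b)
    (hk : b - a ≤ 2 ^ k) :
    ∃ i ∈ Set.Icc a b, dist (q i) o - h / 2 - δ * k ≤ gromovProd o (q a) (q b) := by
  induction k generalizing a b with
  | zero =>
    have hstep : dist (q a) (q b) ≤ h := by
      rcases (show b = a ∨ b = a + 1 by omega) with hb | hb
      · rw [hb, dist_self]; exact dist_nonneg.trans (hq a)
      · rw [hb]; exact hq a
    have := min_dist_sub_le_gromovProd o (q a) (q b)
    rcases min_cases (dist (q a) o) (dist (q b) o) with ⟨hmin, -⟩ | ⟨hmin, -⟩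
    · exact ⟨a, ⟨le_rfl, hab⟩, by push_cast; linarith⟩
    · exact ⟨b, ⟨hab, le_rfl⟩, by push_cast; linarith⟩
  | succ k ih =>
    rw [pow_succ] at hk
    set m := (a + b) / 2
    obtain ⟨i, hi, hqi⟩ := ih (a := a) (b := m) (by omega) (by omega)
    obtain ⟨j, hj, hqj⟩ := ih (a := m) (b := b) (by omega) (by omega)
    have := hyp o (q a) (q b) (q m)
    push_cast
    rcases min_cases (gromovProd o (q a) (q m)) (gromovProd o (q m) (q b))
      with ⟨hmin, -⟩ | ⟨hmin, -⟩
    · exact ⟨i, ⟨hi.1, hi.2.trans (by omega)⟩, by linarith⟩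
    · exact ⟨j, ⟨(by omega : a ≤ m).trans hj.1, hj.2⟩, by linarith⟩

theorem exists_dist_sub_le_gromovProd (hyp : GromovHyperbolicWith Y δ) {q : ℕ → Y} {h : ℝ}
    (hq : ∀ i, dist (q i) (q (i + 1)) ≤ h) (o : Y) {k a b : ℕ} (hk : dist a b ≤ 2 ^ k) :
    ∃ i ≤ max a b, dist (q i) o - h / 2 - δ * k ≤ gromovProd o (q a) (q b) := by
  rcases le_total a b with hab | hba
  · have : ((b - a : ℕ) : ℝ) ≤ 2 ^ k := by
      rwa [Nat.cast_sub hab, ← abs_of_nonneg (sub_nonneg.2 (Nat.cast_le.2 hab)), abs_sub_comm,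
        ← Nat.dist_eq]
    obtain ⟨i, hi, hqi⟩ :=
      hyp.exists_dist_sub_le_gromovProd_of_le hq o hab (k := k) (by exact_mod_cast this)
    exact ⟨i, hi.2.trans (le_max_right a b), hqi⟩
  · have : ((a - b : ℕ) : ℝ) ≤ 2 ^ k := by
      rwa [Nat.cast_sub hba, ← abs_of_nonneg (sub_nonneg.2 (Nat.cast_le.2 hba)), ← Nat.dist_eq]
    obtain ⟨i, hi, hqi⟩ :=
      hyp.exists_dist_sub_le_gromovProd_of_le hq o hba (k := k) (by exact_mod_cast this)
    exact ⟨i, hi.2.trans (le_max_left a b), gromovProd_comm o (q a) (q b) ▸ hqi⟩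

end GromovHyperbolicWith

theorem exists_le_two_pow_le {x : ℝ} (hx : 0 ≤ x) :
    ∃ k : ℕ, x ≤ 2 ^ k ∧ (2 : ℝ) ^ k ≤ 2 * x + 1 := by
  rcases lt_or_ge x 1 with hx1 | hx1
  · exact ⟨0, by simpa using hx1.le, by simpa using hx⟩
  · obtain ⟨k, hk, hk'⟩ := exists_nat_pow_near hx1 one_lt_two
    exact ⟨k + 1, hk'.le, by rw [pow_succ]; linarith⟩

theorem exists_le_of_two_pow_le {a b c d : ℝ} (ha : 0 ≤ a) (hd : 0 ≤ d) :
    ∃ K : ℝ, ∀ (x : ℝ) (k : ℕ), (2 : ℝ) ^ k ≤ a * x + b → x ≤ c + d * k → x ≤ K := by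
  have hlim : Tendsto
      (fun k : ℕ => a * d * ((k : ℝ) ^ 1 / 2 ^ k) + (a * c + b) * ((k : ℝ) ^ 0 / 2 ^ k))
      atTop (𝓝 0) := by
    simpa using ((tendsto_pow_const_div_const_pow_of_one_lt 1 one_lt_two).const_mul (a * d)).add
      ((tendsto_pow_const_div_const_pow_of_one_lt 0 one_lt_two).const_mul (a * c + b))
  obtain ⟨k₀, hk₀⟩ := eventually_atTop.1 (hlim.eventually (gt_mem_nhds one_pos))
  refine ⟨c + d * k₀, fun x k hk hx => ?_⟩
  rcases lt_or_ge k k₀ with hkk | hkk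
  · exact hx.trans (by gcongr)
  · have h2k : (0 : ℝ) < 2 ^ k := by positivity
    have := hk₀ k hkk
    simp only [pow_one, pow_zero] at this
    rw [← mul_div_assoc, ← mul_div_assoc, ← add_div, div_lt_one h2k] at this
    nlinarith

namespace QuasiIsometricEmbedding

variable {X : Type*} [MetricSpace X] {f : X → Y} {α β : ℝ}

theorem dist_le (hf : QuasiIsometricEmbedding f α β) (x y : X) :
    dist (f x) (f y) ≤ α * dist x y + β :=
  (hf.2.2 x y).2

theorem dist_le_mul_add (hf : QuasiIsometricEmbedding f α β) (x y : X) :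
    dist x y ≤ α * (dist (f x) (f y) + β) := by
  have hα : 0 < α := zero_lt_one.trans_le hf.1
  have := (hf.2.2 x y).1
  rw [inv_mul_eq_div, sub_le_iff_le_add, div_le_iff₀ hα] at this
  linarith

theorem comp_isometry {Z : Type*} [MetricSpace Z] {g : Z → X}
    (hf : QuasiIsometricEmbedding f α β) (hg : Isometry g) :
    QuasiIsometricEmbedding (f ∘ g) α β :=
  ⟨hf.1, hf.2.1, fun x y => hg.dist_eq x y ▸ hf.2.2 (g x) (g y)⟩

theorem dist_succ_le {q : ℕ → Y} (hq : QuasiIsometricEmbedding q α β) (i : ℕ) :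
    dist (q i) (q (i + 1)) ≤ α + β := by
  simpa [Nat.dist_eq] using hq.dist_le i (i + 1)

theorem tendsto_dist_atTop {q : ℕ → Y} (hq : QuasiIsometricEmbedding q α β) :
    Tendsto (fun n => dist (q 0) (q n)) atTop atTop := by
  have hα : 0 < α := zero_lt_one.trans_le hq.1
  refine tendsto_atTop_mono (fun n => ?_)
    ((tendsto_natCast_atTop_atTop.const_mul_atTop (inv_pos.2 hα)).atTop_add
      (tendsto_const_nhds (x := -β)))
  have := hq.dist_le_mul_add 0 n
  rw [Nat.dist_eq, Nat.cast_zero, zero_sub, abs_neg, Nat.abs_cast] at this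
  rw [← sub_eq_add_neg, sub_le_iff_le_add, inv_mul_le_iff₀ hα]
  exact this

end QuasiIsometricEmbedding

theorem exists_anchor {q : ℕ → Y} {n a₀ : ℕ} (ha₀ : a₀ ≤ n) {σ : ℝ → Y} {y : Y}
    (hσ : IsGeodesicSegment σ (q a₀) y) {D u₀ : ℝ} (hu₀ : u₀ ∈ Set.Icc 0 (dist (q a₀) y))
    (hD : ∀ u ∈ Set.Icc 0 (dist (q a₀) y), ∃ i ≤ n, dist (σ u) (q i) ≤ D)
    (hfar : ∀ i ≤ n, D - 1 ≤ dist (σ u₀) (q i)) :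
    ∃ u ∈ Set.Icc (u₀ - 2 * D) u₀, 0 ≤ u ∧
      ∃ a ≤ n, dist (σ u) (q a) ≤ D ∧ D - 1 ≤ gromovProd (σ u₀) (σ u) (q a) := by
  have hD0 : 0 ≤ D := by
    obtain ⟨i, -, hi⟩ := hD u₀ hu₀
    exact dist_nonneg.trans hi
  rcases le_or_gt (2 * D) u₀ with h | h
  · obtain ⟨a, ha, hda⟩ := hD (u₀ - 2 * D) ⟨by linarith, by linarith [hu₀.2]⟩
    refine ⟨u₀ - 2 * D, ⟨le_rfl, by linarith⟩, by linarith, a, ha, hda, ?_⟩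
    have h2D : dist (σ (u₀ - 2 * D)) (σ u₀) = 2 * D := by
      rw [hσ.dist_eq_sub (by linarith) (by linarith) hu₀.2]; ring
    have := hfar a ha
    rw [gromovProd, h2D, dist_comm (q a)]
    linarith
  · refine ⟨0, ⟨by linarith, hu₀.1⟩, le_rfl, a₀, ha₀, by rw [hσ.1, dist_self]; linarith [hu₀.1], ?_⟩
    rw [hσ.1, gromovProd_self, dist_comm]
    exact hfar a₀ ha₀

section Morse

variable {δ α β : ℝ} {q : ℕ → Y} {n : ℕ} {σ : ℝ → Y}

/-- Seen from `σ u₀`, the quadrilateral formed by `σ` and `q` between two anchors has Gromov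
products about `D` on three sides and `0` on the side along `σ`, so `D ≤ C + δ log₂ D`. -/
theorem exists_two_pow_le_of_far (hyp : GromovHyperbolicWith Y δ) (hδ : 0 ≤ δ)
    (hq : QuasiIsometricEmbedding q α β) (hσ : IsGeodesicSegment σ (q 0) (q n)) {D u₀ : ℝ}
    (hu₀ : u₀ ∈ Set.Icc 0 (dist (q 0) (q n)))
    (hD : ∀ u ∈ Set.Icc 0 (dist (q 0) (q n)), ∃ i ≤ n, dist (σ u) (q i) ≤ D)
    (hfar : ∀ i ≤ n, D - 1 ≤ dist (σ u₀) (q i)) :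
    ∃ k : ℕ, (2 : ℝ) ^ k ≤ 12 * α * D + (2 * α * β + 1) ∧
      D ≤ 1 + (α + β) / 2 + 2 * δ + δ * k := by
  set L := dist (q 0) (q n)
  have hL : dist (q n) (q 0) = L := dist_comm _ _
  obtain ⟨s, hs, hs0, a, ha, hsa, hga⟩ := exists_anchor (Nat.zero_le n) hσ hu₀ hD hfar
  have hσ' : IsGeodesicSegment (fun r => σ (L - r)) (q n) (q 0) := hσ.reverse
  obtain ⟨s', hs', hs'0, b, hb, hsb, hgb⟩ := exists_anchor le_rfl hσ' (u₀ := L - u₀)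
    (by rw [hL]; exact ⟨by linarith [hu₀.2], by linarith [hu₀.1]⟩)
    (fun u hu => hD (L - u) (by rw [hL] at hu; exact ⟨by linarith [hu.2], by linarith [hu.1]⟩))
    (by simpa only [sub_sub_cancel] using hfar)
  simp only [sub_sub_cancel] at hsb hgb
  have hst : dist (σ s) (σ (L - s')) ≤ 4 * D := by
    rw [hσ.dist_eq_sub hs0 (by linarith [hs.2, hs'.2]) (by linarith)]
    linarith [hs.1, hs'.1]
  have hab : dist (q a) (q b) ≤ 6 * D := by
    calc dist (q a) (q b) ≤ dist (q a) (σ s) + dist (σ s) (σ (L - s')) + dist (σ (L - s')) (q b) :=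
          dist_triangle4 _ _ _ _
      _ ≤ D + 4 * D + D := by rw [dist_comm (q a)]; gcongr
      _ = 6 * D := by ring
  have hα : 0 ≤ α := zero_le_one.trans hq.1
  obtain ⟨k, hk, hk'⟩ := exists_le_two_pow_le (dist_nonneg (x := a) (y := b))
  obtain ⟨i, hi, hqi⟩ := hyp.exists_dist_sub_le_gromovProd hq.dist_succ_le (σ u₀) hk
  have hfar_i := hfar i (hi.trans (max_le ha hb))
  have hzero := hyp.min₃_sub_le hδ (σ u₀) (σ s) (q a) (q b) (σ (L - s'))
  rw [hσ.gromovProd_eq_zero hs0 hs.2 (by linarith [hs'.2]) (by linarith [hs'.1])] at hzero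
  refine ⟨k, ?_, ?_⟩
  · have := (hq.dist_le_mul_add a b).trans (mul_le_mul_of_nonneg_left (by linarith) hα :
      α * (dist (q a) (q b) + β) ≤ α * (6 * D + β))
    linarith
  · have he : 0 ≤ (α + β) / 2 + δ * k := by have := hq.2.1; positivity
    rw [dist_comm] at hfar_i
    rcases min_le_iff.1 (sub_nonpos.1 hzero) with h | h
    · rcases min_le_iff.1 h with h | h <;> linarith
    · rw [gromovProd_comm] at h; linarith

theorem exists_forall_dist_quasiGeodesic_le (hyp : GromovHyperbolicWith Y δ) (hδ : 0 ≤ δ)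
    (hα : 0 ≤ α) :
    ∃ D₀ : ℝ, ∀ q : ℕ → Y, QuasiIsometricEmbedding q α β → ∀ (n : ℕ) (σ : ℝ → Y),
      IsGeodesicSegment σ (q 0) (q n) →
        ∀ u ∈ Set.Icc 0 (dist (q 0) (q n)), ∃ i ≤ n, dist (σ u) (q i) ≤ D₀ := by
  obtain ⟨K, hK⟩ := exists_le_of_two_pow_le (a := 12 * α) (b := 2 * α * β + 1)
    (c := 1 + (α + β) / 2 + 2 * δ) (by positivity) hδ
  refine ⟨K, fun q hq n σ hσ => ?_⟩
  set L := dist (q 0) (q n)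
  have hnearest : ∀ u, ∃ i ∈ Finset.range (n + 1),
      ∀ j ∈ Finset.range (n + 1), dist (σ u) (q i) ≤ dist (σ u) (q j) :=
    fun u => Finset.exists_min_image _ _ ⟨0, by simp⟩
  choose I hIn hImin using hnearest
  simp only [Finset.mem_range, Nat.lt_succ_iff] at hIn hImin
  have hbdd : BddAbove ((fun u => dist (σ u) (q (I u))) '' Set.Icc 0 L) := by
    refine ⟨L, ?_⟩
    rintro _ ⟨u, hu, rfl⟩
    calc dist (σ u) (q (I u)) ≤ dist (σ u) (q 0) := hImin u 0 (Nat.zero_le n)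
      _ = u := by rw [dist_comm, hσ.dist_left hu]
      _ ≤ L := hu.2
  set D := sSup ((fun u => dist (σ u) (q (I u))) '' Set.Icc 0 L)
  have hD : ∀ u ∈ Set.Icc 0 L, dist (σ u) (q (I u)) ≤ D := fun u hu =>
    le_csSup hbdd ⟨u, hu, rfl⟩
  obtain ⟨_, ⟨u₀, hu₀, rfl⟩, hu₀D⟩ :=
    exists_lt_of_lt_csSup ((Set.nonempty_Icc.2 dist_nonneg).image _) (sub_one_lt D)
  obtain ⟨k, hk, hDk⟩ := exists_two_pow_le_of_far hyp hδ hq hσ hu₀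
    (fun u hu => ⟨I u, hIn u, hD u hu⟩) (fun i hi => hu₀D.le.trans (hImin u₀ i hi))
  exact fun u hu => ⟨I u, hIn u, (hD u hu).trans (hK D k (by linarith) hDk)⟩

theorem IsGeodesicSegment.exists_dist_le_of_le_of_le (hσ : IsGeodesicSegment σ (q 0) (q n))
    {D : ℝ} (hD : ∀ u ∈ Set.Icc 0 (dist (q 0) (q n)), ∃ j ≤ n, dist (σ u) (q j) ≤ D) {i : ℕ}
    (hi : i ≤ n) :
    ∃ u ∈ Set.Icc 0 (dist (q 0) (q n)), ∃ j ≤ i, ∃ j', i ≤ j' ∧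
      dist (σ u) (q j) ≤ D ∧ dist (σ u) (q j') ≤ D := by
  set L := dist (q 0) (q n)
  have hD0 : 0 ≤ D := by
    obtain ⟨j, -, hj⟩ := hD 0 ⟨le_rfl, dist_nonneg⟩
    exact dist_nonneg.trans hj
  have hclosed : ∀ s : Finset ℕ,
      IsClosed (Set.Icc 0 L ∩ σ ⁻¹' ⋃ j ∈ s, closedBall (q j) D) := fun s =>
    hσ.continuousOn.preimage_isClosed_of_isClosed isClosed_Icc
      (isClosed_biUnion_finset fun _ _ => isClosed_closedBall)
  obtain ⟨u, hu, ⟨-, hleft⟩, ⟨-, hright⟩⟩ := isPreconnected_closed_iff.1 isPreconnected_Icc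
    _ _ (hclosed (Finset.Iic i)) (hclosed (Finset.Icc i n))
    (fun u hu => by
      obtain ⟨j, hj, hju⟩ := hD u hu
      rcases le_total j i with hji | hij
      · exact Or.inl ⟨hu, Set.mem_iUnion₂.2 ⟨j, Finset.mem_Iic.2 hji, mem_closedBall.2 hju⟩⟩
      · exact Or.inr ⟨hu, Set.mem_iUnion₂.2 ⟨j, Finset.mem_Icc.2 ⟨hij, hj⟩, mem_closedBall.2 hju⟩⟩)
    ⟨0, ⟨le_rfl, dist_nonneg⟩, ⟨le_rfl, dist_nonneg⟩, Set.mem_iUnion₂.2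
      ⟨0, Finset.mem_Iic.2 (Nat.zero_le i), by rw [hσ.1]; exact mem_closedBall_self hD0⟩⟩
    ⟨L, ⟨dist_nonneg, le_rfl⟩, ⟨dist_nonneg, le_rfl⟩, Set.mem_iUnion₂.2
      ⟨n, Finset.mem_Icc.2 ⟨hi, le_rfl⟩, by rw [hσ.2.1]; exact mem_closedBall_self hD0⟩⟩
  simp only [Set.mem_preimage, Set.mem_iUnion, Finset.mem_Iic, Finset.mem_Icc, mem_closedBall,
    exists_prop] at hleft hright
  obtain ⟨j, hji, hj⟩ := hleft
  obtain ⟨j', ⟨hij', -⟩, hj'⟩ := hright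
  exact ⟨u, hu, j, hji, j', hij', hj, hj'⟩

theorem exists_forall_dist_geodesicSegment_le (hyp : GromovHyperbolicWith Y δ) (hδ : 0 ≤ δ)
    (hα : 0 ≤ α) :
    ∃ D : ℝ, ∀ q : ℕ → Y, QuasiIsometricEmbedding q α β → ∀ (n : ℕ) (σ : ℝ → Y),
      IsGeodesicSegment σ (q 0) (q n) →
        ∀ i ≤ n, ∃ u ∈ Set.Icc 0 (dist (q 0) (q n)), dist (q i) (σ u) ≤ D := by
  obtain ⟨D₀, hD₀⟩ := exists_forall_dist_quasiGeodesic_le hyp hδ hα (β := β)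
  refine ⟨α * (α * (2 * D₀ + β)) + β + D₀, fun q hq n σ hσ i hi => ?_⟩
  obtain ⟨u, hu, j, hji, j', hij', hj, hj'⟩ :=
    hσ.exists_dist_le_of_le_of_le (hD₀ q hq n σ hσ) hi
  have hjj' : dist j j' ≤ α * (2 * D₀ + β) := by
    refine (hq.dist_le_mul_add j j').trans (mul_le_mul_of_nonneg_left ?_ hα)
    linarith [dist_triangle_left (q j) (q j') (σ u)]
  have hij : dist i j ≤ dist j j' := by
    rw [Nat.dist_eq, Nat.dist_eq, abs_of_nonneg (by simpa using hji),
      abs_of_nonpos (by simpa using hji.trans hij')]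
    linarith [(Nat.cast_le (α := ℝ)).2 hij']
  refine ⟨u, hu, ?_⟩
  calc dist (q i) (σ u) ≤ dist (q i) (q j) + dist (σ u) (q j) := dist_triangle_right _ _ _
    _ ≤ α * dist i j + β + D₀ := by gcongr; exact hq.dist_le i j
    _ ≤ α * (α * (2 * D₀ + β)) + β + D₀ := by gcongr; exact hij.trans hjj'

end Morse

theorem IsGeodesicRay.isometry_natCast {γ : ℝ → Y} (hγ : IsGeodesicRay γ) :
    Isometry fun n : ℕ => γ n :=
  Isometry.of_dist_eq fun m n => by
    rw [hγ m n (Nat.cast_nonneg m) (Nat.cast_nonneg n), Nat.dist_eq]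

theorem IsGeodesicRay.dist_natCeil_le {γ : ℝ → Y} (hγ : IsGeodesicRay γ) {t : ℝ} (ht : 0 ≤ t) :
    dist (γ t) (γ ⌈t⌉₊) ≤ 1 := by
  rw [hγ t _ ht (Nat.cast_nonneg _), abs_sub_comm,
    abs_of_nonneg (sub_nonneg.2 (Nat.le_ceil t))]
  linarith [Nat.ceil_lt_add_one ht]

theorem hasPoleAt_of_forall_exists {v : Y} {M : ℝ}
    (h : ∀ x : Y, ∃ γ : ℝ → Y, IsGeodesicRay γ ∧ γ 0 = v ∧ ∃ t : ℝ, 0 ≤ t ∧ dist x (γ t) ≤ M) :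
    HasPoleAt v :=
  ⟨max M 1, lt_max_of_lt_right one_pos, fun x => by
    obtain ⟨γ, hγ, hγ0, t, ht, hxt⟩ := h x
    exact ⟨γ, hγ, hγ0, t, ht, hxt.trans (le_max_left M 1)⟩⟩

section Ultralimit

variable [ProperSpace Y] {ι : Type*} {o : Y} {p : ι → Y} {σ : ι → ℝ → Y}

theorem exists_geodesicRay_tendsto (U : Ultrafilter ι)
    (hσ : ∀ i, IsGeodesicSegment (σ i) o (p i)) (hp : Tendsto (fun i => dist o (p i)) U atTop) :
    ∃ Φ : ℝ → Y, IsGeodesicRay Φ ∧ Φ 0 = o ∧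
      ∀ t, 0 ≤ t → Tendsto (fun i => σ i t) U (𝓝 (Φ t)) := by
  have hlim : ∀ t : ℝ, 0 ≤ t → ∃ z, Tendsto (fun i => σ i t) U (𝓝 z) := by
    intro t ht
    have hball : ∀ᶠ i in U, σ i t ∈ closedBall o t :=
      (hp.eventually_ge_atTop t).mono fun i hi => by
        rw [mem_closedBall, dist_comm, (hσ i).dist_left ⟨ht, hi⟩]
    obtain ⟨z, -, hz⟩ :=
      (isCompact_closedBall o t).ultrafilter_le_nhds' (U.map fun i => σ i t) hball
    exact ⟨z, hz⟩
  have : Nonempty Y := ⟨o⟩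
  choose! Φ hΦ using hlim
  refine ⟨Φ, fun s t hs ht => ?_, ?_, hΦ⟩
  · refine tendsto_nhds_unique ((hΦ s hs).dist (hΦ t ht)) (tendsto_const_nhds.congr' ?_)
    filter_upwards [hp.eventually_ge_atTop (max s t)] with i hi
    exact ((hσ i).2.2 s ⟨hs, (le_max_left s t).trans hi⟩ t ⟨ht, (le_max_right s t).trans hi⟩).symm
  · exact tendsto_nhds_unique (hΦ 0 le_rfl) (by simp only [(hσ _).1]; exact tendsto_const_nhds)

theorem exists_geodesicRay_dist_le_of_tendsto {l : Filter ι} [l.NeBot]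
    (hσ : ∀ i, IsGeodesicSegment (σ i) o (p i)) (hp : Tendsto (fun i => dist o (p i)) l atTop)
    {y : Y} {M : ℝ} (hy : ∀ᶠ i in l, ∃ u ∈ Set.Icc 0 (dist o (p i)), dist y (σ i u) ≤ M) :
    ∃ Φ : ℝ → Y, IsGeodesicRay Φ ∧ Φ 0 = o ∧ ∃ t, 0 ≤ t ∧ dist y (Φ t) ≤ M := by
  set U := Ultrafilter.of l
  have hU : (U : Filter ι) ≤ l := Ultrafilter.of_le l
  obtain ⟨Φ, hΦ, hΦ0, hlim⟩ := exists_geodesicRay_tendsto U hσ (hp.mono_left hU)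
  choose! u hu using fun i (h : ∃ u ∈ Set.Icc 0 (dist o (p i)), dist y (σ i u) ≤ M) => h
  have hyU : ∀ᶠ i in U, u i ∈ Set.Icc 0 (dist o (p i)) ∧ dist y (σ i (u i)) ≤ M :=
    hU (hy.mono fun i hi => hu i hi)
  have hbound : ∀ᶠ i in U, u i ∈ Set.Icc 0 (dist o y + M) := hyU.mono fun i ⟨hui, hyi⟩ =>
    ⟨hui.1, by linarith [(hσ i).dist_left hui, dist_triangle o y (σ i (u i))]⟩
  obtain ⟨t, ht, hut⟩ := isCompact_Icc.ultrafilter_le_nhds' (U.map u) hbound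
  have hut : Tendsto u U (𝓝 t) := hut
  have hMlim : Tendsto (fun i => M + |u i - t|) U (𝓝 M) := by
    simpa using (tendsto_const_nhds (x := M)).add (hut.sub_const t).abs
  refine ⟨Φ, hΦ, hΦ0, t, ht.1,
    le_of_tendsto_of_tendsto (tendsto_const_nhds.dist (hlim t ht.1)) hMlim ?_⟩
  filter_upwards [hyU, hp.mono_left hU |>.eventually_ge_atTop t] with i ⟨hui, hyi⟩ hti
  calc dist y (σ i t) ≤ dist y (σ i (u i)) + dist (σ i (u i)) (σ i t) := dist_triangle _ _ _
    _ ≤ M + |u i - t| := by rw [(hσ i).2.2 _ hui t ⟨ht.1, hti⟩]; gcongr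

end Ultralimit

end

theorem pole_of_quasiIsometry_general {X Y : Type*} [MetricSpace X] [MetricSpace Y]
    [ProperSpace Y]
    (hYgeo : GeodesicSpace Y)
    (hYhyp : GromovHyperbolic Y)
    (f : X → Y) (α β ε : ℝ)
    (hf : QuasiIsometricEmbedding f α β) (hfull : IsFull f ε)
    (v : X) (hv : HasPoleAt v) : HasPoleAt (f v) := by
  obtain ⟨δ, hδ, hyp⟩ := hYhyp
  obtain ⟨D, hD⟩ := exists_forall_dist_geodesicSegment_le hyp hδ (zero_le_one.trans hf.1) (β := β)
  obtain ⟨M, -, hpole⟩ := hv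
  refine hasPoleAt_of_forall_exists (M := ε + (α * (M + 1) + β) + D) fun y => ?_
  obtain ⟨x, hx⟩ := hfull.2 y
  obtain ⟨γ, hγ, hγ0, t, ht, hxt⟩ := hpole x
  set q : ℕ → Y := fun n => f (γ n)
  have hq : QuasiIsometricEmbedding q α β := hf.comp_isometry hγ.isometry_natCast
  have hq0 : q 0 = f v := by simp [q, hγ0]
  have hyq : dist y (q ⌈t⌉₊) ≤ ε + (α * (M + 1) + β) := by
    have hxq : dist x (γ ⌈t⌉₊) ≤ M + 1 := by
      linarith [dist_triangle x (γ t) (γ ⌈t⌉₊), hγ.dist_natCeil_le ht]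
    calc dist y (q ⌈t⌉₊) ≤ dist (f x) y + dist (f x) (q ⌈t⌉₊) := dist_triangle_left _ _ _
      _ ≤ ε + (α * (M + 1) + β) := by
        gcongr
        exact (hf.dist_le x _).trans (by gcongr; exact zero_le_one.trans hf.1)
  choose σ hσ using fun n => hYgeo (f v) (q n)
  refine exists_geodesicRay_dist_le_of_tendsto hσ (hq0 ▸ hq.tendsto_dist_atTop) ?_
  filter_upwards [eventually_ge_atTop ⌈t⌉₊] with n hn
  obtain ⟨u, hu, hqu⟩ := hD q hq n (σ n) (hq0 ▸ hσ n) _ hn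
  exact ⟨u, hq0 ▸ hu, by linarith [dist_triangle y (q ⌈t⌉₊) (σ n u)]⟩

/-- A quasi-isometry between proper hyperbolic geodesic spaces maps a pole to a pole. -/
theorem pole_of_quasiIsometry {X Y : Type*} [MetricSpace X] [MetricSpace Y]
    [ProperSpace X] [ProperSpace Y]
    (hXgeo : GeodesicSpace X) (hYgeo : GeodesicSpace Y)
    (hXhyp : GromovHyperbolic X) (hYhyp : GromovHyperbolic Y)
    (f : X → Y) (α β ε : ℝ)
    (hf : QuasiIsometricEmbedding f α β) (hfull : IsFull f ε)
    (v : X) (hv : HasPoleAt v) : HasPoleAt (f v) :=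
  pole_of_quasiIsometry_general hYgeo hYhyp f α β ε hf hfull v hv
end
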